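/- arXiv:2509.01833 — 3 statements merged into one kernel-verified Lean document; each statement's English description precedes it below -/
import Mathlib

section
/- Let L ≥ 1, let b : ℤ → ℝ be L-periodic with period sum C = ∑_{i=0}^{L-1} b(i), and suppose E : ℤ → ℝ has a motion event on [i₁, i₂] of duration M = i₂ − i₁ + 1. Then the set {n ∈ ℤ : W_E(n) ≠ C} is contained in the integer interval [i₁ − L + 1, i₂] and therefore has at most M + L − 1 elements. -/
/-!
Sliding the window one step adds `E (n + L)` and drops `E n`; for an `L`-periodic baseline these
agree, so every window of the baseline sums to its period sum `C`. A window starting at `n` covers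
`[n, n + L - 1]`, which misses the event interval `[i₁, i₂]` exactly when `n ∉ [i₁ - L + 1, i₂]`;
there `E` coincides with `b`, so the window sum is `C`. The count is the length `M + L - 1` of that
interval.
-/

/-- Window-summed spoke energy: `W L E n = ∑_{i=0}^{L-1} E (n+i)`. -/
def windowSum (L : ℕ) (E : ℤ → ℝ) (n : ℤ) : ℝ :=
  ∑ i ∈ Finset.range L, E (n + i)

open Finset

theorem windowSum_add_one (L : ℕ) (E : ℤ → ℝ) (n : ℤ) :
    windowSum L E (n + 1) + E n = windowSum L E n + E (n + L) := by
  have hsucc := sum_range_succ (fun i : ℕ => E (n + i)) L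
  have hsucc' := sum_range_succ' (fun i : ℕ => E (n + i)) L
  simp only [Nat.cast_add, Nat.cast_one, Nat.cast_zero, add_zero] at hsucc'
  simp only [windowSum, add_assoc, add_comm (1 : ℤ)]
  linarith

theorem windowSum_zero (L : ℕ) (E : ℤ → ℝ) :
    windowSum L E 0 = ∑ i ∈ range L, E i := by
  simp [windowSum]

theorem windowSum_eq_of_periodic {L : ℕ} {b : ℤ → ℝ} (hb : Function.Periodic b L) (n : ℤ) :
    windowSum L b n = ∑ i ∈ range L, b i := by
  have hstep : ∀ k : ℤ, windowSum L b (k + 1) = windowSum L b k := fun k => by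
    linarith [windowSum_add_one L b k, hb k]
  rw [← windowSum_zero]
  induction n using Int.induction_on with
  | zero => rfl
  | succ k ih => rw [hstep, ih]
  | pred k ih => rw [← ih, ← hstep, sub_add_cancel]

theorem windowSum_congr_of_eqOn_compl_Icc {L : ℕ} {E b : ℤ → ℝ} {i₁ i₂ : ℤ}
    (hbefore : ∀ i : ℤ, i < i₁ → E i = b i) (hafter : ∀ i : ℤ, i₂ < i → E i = b i)
    {n : ℤ} (hn : n ∉ Set.Icc (i₁ - L + 1) i₂) :
    windowSum L E n = windowSum L b n := by
  refine sum_congr rfl fun i hi => ?_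
  have hiL := mem_range.mp hi
  rw [Set.mem_Icc, not_and_or, not_le, not_le] at hn
  rcases hn with hlow | hhigh
  · exact hbefore _ (by omega)
  · exact hafter _ (by omega)

theorem windowSum_deviation_subset_and_card_general
    (L : ℕ)
    (b : ℤ → ℝ) (hb : ∀ i : ℤ, b (i + L) = b i)
    (C : ℝ) (hC : C = ∑ i ∈ Finset.range L, b i)
    (E : ℤ → ℝ) (i₁ i₂ : ℤ) (hi : i₁ ≤ i₂)
    (hbefore : ∀ i : ℤ, i < i₁ → E i = b i)
    (hafter : ∀ i : ℤ, i₂ < i → E i = b i)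
    (M : ℤ) (hM : M = i₂ - i₁ + 1) :
    {n : ℤ | windowSum L E n ≠ C} ⊆ Set.Icc (i₁ - L + 1) i₂ ∧
    ({n : ℤ | windowSum L E n ≠ C}.ncard : ℤ) ≤ M + L - 1 := by
  have hsub : {n : ℤ | windowSum L E n ≠ C} ⊆ Set.Icc (i₁ - L + 1) i₂ := fun n hn => by
    by_contra hout
    exact hn (by rw [windowSum_congr_of_eqOn_compl_Icc hbefore hafter hout,
      windowSum_eq_of_periodic hb, hC])
  refine ⟨hsub, ?_⟩
  have hIcc : ((Set.Icc (i₁ - L + 1) i₂).ncard : ℤ) = i₂ + 1 - (i₁ - L + 1) := by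
    rw [← coe_Icc, Set.ncard_coe_finset, Int.card_Icc_of_le _ _ (by omega)]
  calc ({n : ℤ | windowSum L E n ≠ C}.ncard : ℤ)
      ≤ (Set.Icc (i₁ - L + 1) i₂).ncard := by
        exact_mod_cast Set.ncard_le_ncard hsub (Set.finite_Icc _ _)
    _ = M + L - 1 := by rw [hIcc, hM]; ring

/-- the set of window indices where the window-summed spoke energy
deviates from the baseline value `C` is contained in `[i₁ - L + 1, i₂]`, hence
has at most `M + L - 1` elements, where `M = i₂ - i₁ + 1`. -/
theorem windowSum_deviation_subset_and_card
    (L : ℕ) (hL : 1 ≤ L)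
    (b : ℤ → ℝ) (hb : ∀ i : ℤ, b (i + L) = b i)
    (C : ℝ) (hC : C = ∑ i ∈ Finset.range L, b i)
    (E : ℤ → ℝ) (i₁ i₂ : ℤ) (hi : i₁ ≤ i₂)
    (hbefore : ∀ i : ℤ, i < i₁ → E i = b i)
    (hafter : ∀ i : ℤ, i₂ < i → E i = b i)
    (M : ℤ) (hM : M = i₂ - i₁ + 1) :
    {n : ℤ | windowSum L E n ≠ C} ⊆ Set.Icc (i₁ - L + 1) i₂ ∧
    ({n : ℤ | windowSum L E n ≠ C}.ncard : ℤ) ≤ M + L - 1 :=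
  windowSum_deviation_subset_and_card_general L b hb C hC E i₁ i₂ hi hbefore hafter M hM
end

section
/- (Fourier Slice Theorem in 3D.) Let f : ℝ³ → ℂ be a Schwartz function and let u ∈ ℝ³ be a unit vector. Let p_{f,u}(t) = ∫_{u^⊥} f(t·u + s) ds be the projection of f along u. Then for every k ∈ ℝ, the one-dimensional Fourier transform of the projection equals the restriction of the three-dimensional Fourier transform of f to the line through the origin in direction u: 𝓕₁(p_{f,u})(k) = 𝓕₃f(k·u). -/
/-!
The isometric splitting `E = ℝ u ⊕ u^⊥` identifies Lebesgue measure on `E` with the product of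
Lebesgue measures on `ℝ` and on `u^⊥`, and on `t • u + s` the character `𝐞 (-⟪x, k • u⟫)` only
sees the coordinate `t`. Fubini therefore turns `𝓕 f (k • u)` into
`∫ t, 𝐞 (-(t * k)) • ∫ s, f (t • u + s)`, the Fourier transform of the projection at `k`.
-/

open MeasureTheory
open scoped FourierTransform

/-- The projection of `f : ℝ³ → ℂ` along a direction `u`:
`p_{f,u}(t) = ∫_{u^⊥} f (t • u + s) ds`, the integral being over the orthogonal
complement of `u` with its canonical Haar (Lebesgue) measure. -/
noncomputable def proj (f : EuclideanSpace ℝ (Fin 3) → ℂ)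
    (u : EuclideanSpace ℝ (Fin 3)) (t : ℝ) : ℂ :=
  ∫ s : (ℝ ∙ u)ᗮ, f (t • u + (s : EuclideanSpace ℝ (Fin 3)))

open scoped RealInnerProductSpace

theorem real_inner_smul_add_orthogonal_smul {E : Type*} [NormedAddCommGroup E]
    [InnerProductSpace ℝ E] {u : E} (hu : ‖u‖ = 1) (t k : ℝ) (s : (ℝ ∙ u)ᗮ) :
    ⟪t • u + s, k • u⟫ = t * k := by
  rw [inner_add_left, real_inner_smul_left, real_inner_smul_right, real_inner_smul_right,
    real_inner_self_eq_norm_sq, hu, Submodule.mem_orthogonal_singleton_iff_inner_left.1 s.2]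
  ring

namespace InnerProductSpace

variable {E F : Type*} [NormedAddCommGroup E] [InnerProductSpace ℝ E]
  [MeasurableSpace E] [BorelSpace E] [NormedAddCommGroup F] [NormedSpace ℝ F]

noncomputable def lineOrthogonalEquiv (u : E) (hu : ‖u‖ = 1) : ℝ × (ℝ ∙ u)ᗮ ≃ᵐ E :=
  ((LinearIsometryEquiv.toSpanUnitSingleton u hu).toHomeomorph.toMeasurableEquiv.prodCongr
      (MeasurableEquiv.refl _)).trans <|
    (MeasurableEquiv.toLp 2 _).trans
      (ℝ ∙ u).orthogonalDecomposition.symm.toHomeomorph.toMeasurableEquiv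

@[simp]
theorem lineOrthogonalEquiv_apply (u : E) (hu : ‖u‖ = 1) (p : ℝ × (ℝ ∙ u)ᗮ) :
    lineOrthogonalEquiv u hu p = p.1 • u + p.2 :=
  rfl

variable [FiniteDimensional ℝ E]

theorem measurePreserving_lineOrthogonalEquiv (u : E) (hu : ‖u‖ = 1) :
    MeasurePreserving (lineOrthogonalEquiv u hu) :=
  (ℝ ∙ u).orthogonalDecomposition.symm.measurePreserving.comp <|
    (WithLp.volume_preserving_toLp _ _).comp <|
      (LinearIsometryEquiv.toSpanUnitSingleton u hu).measurePreserving.prod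
        (MeasurePreserving.id volume)

theorem integral_eq_integral_integral_smul_add_orthogonal (u : E) (hu : ‖u‖ = 1) {g : E → F}
    (hg : Integrable g) :
    ∫ x, g x = ∫ t : ℝ, ∫ s : (ℝ ∙ u)ᗮ, g (t • u + s) := by
  have hΦ := measurePreserving_lineOrthogonalEquiv u hu
  have hgΦ : Integrable (fun p ↦ g (lineOrthogonalEquiv u hu p)) (volume.prod volume) :=
    (hΦ.integrable_comp_emb (MeasurableEquiv.measurableEmbedding _)).2 hg
  rw [← hΦ.integral_comp', Measure.volume_eq_prod, integral_prod _ hgΦ]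
  simp

end InnerProductSpace

theorem Real.fourier_projection_eq_fourier_smul {E F : Type*} [NormedAddCommGroup E]
    [InnerProductSpace ℝ E] [FiniteDimensional ℝ E] [MeasurableSpace E] [BorelSpace E]
    [NormedAddCommGroup F] [NormedSpace ℂ F] (u : E) (hu : ‖u‖ = 1) {f : E → F}
    (hf : Integrable f) (k : ℝ) :
    𝓕 (fun t : ℝ ↦ ∫ s : (ℝ ∙ u)ᗮ, f (t • u + s)) k = 𝓕 f (k • u) := by
  have hfk : Integrable fun x ↦ 𝐞 (-⟪x, k • u⟫) • f x :=
    (Real.fourierIntegral_convergent_iff (k • u)).2 hf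
  rw [fourier_real_eq, fourier_eq,
    InnerProductSpace.integral_eq_integral_integral_smul_add_orthogonal u hu hfk]
  congr 1 with t
  simp_rw [real_inner_smul_add_orthogonal_smul hu, Circle.smul_def, integral_smul]

/-- Fourier Slice Theorem in 3D: for a Schwartz function `f` on ℝ³
and a unit vector `u`, the 1D Fourier transform of the projection of `f` along `u`
equals the restriction of the 3D Fourier transform of `f` to the line through the
origin in direction `u`: `𝓕₁(p_{f,u})(k) = 𝓕₃ f (k • u)`. -/
theorem fourier_slice_theorem
    (f : SchwartzMap (EuclideanSpace ℝ (Fin 3)) ℂ)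
    (u : EuclideanSpace ℝ (Fin 3)) (hu : ‖u‖ = 1) :
    ∀ k : ℝ, 𝓕 (proj (⇑f) u) k = 𝓕 (⇑f) (k • u) :=
  Real.fourier_projection_eq_fourier_smul u hu f.integrable
end

section
/- (Spoke energy equals projection energy.) Let f : ℝ³ → ℂ be a Schwartz function and let u ∈ ℝ³ be a unit vector. Then the energy of the k-space radial spoke in direction u equals the energy of the corresponding image-space projection: ∫_ℝ |𝓕₃f(k·u)|² dk = ∫_ℝ |p_{f,u}(t)|² dt. -/
/-!
Writing `x = t • u + s` with `s ⊥ u` identifies `E` isometrically with `ℝ × u^⊥`, so Lebesgue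
measure on `E` is the product measure. Fubini then gives the Fourier slice theorem: the
one-dimensional Fourier transform of the projection along `u` is the restriction of `𝓕 f` to the
line `ℝ • u`. That restriction is a Schwartz function, and the projection of a Schwartz function is
continuous and integrable, so Fourier inversion and Plancherel on `ℝ` give the equality of
energies.
-/

open MeasureTheory
open scoped FourierTransform

open scoped SchwartzMap RealInnerProductSpace

section OrthogonalSlice

variable {E : Type*} [NormedAddCommGroup E] [InnerProductSpace ℝ E]

noncomputable def orthogonalSliceEquiv (u : E) (hu : ‖u‖ = 1) :
    WithLp 2 (ℝ × (ℝ ∙ u)ᗮ) ≃ₗᵢ[ℝ] E :=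
  (LinearIsometryEquiv.withLpProdCongr 2 (LinearIsometryEquiv.toSpanUnitSingleton u hu)
    (LinearIsometryEquiv.refl ℝ _)).trans (ℝ ∙ u).orthogonalDecomposition.symm

theorem norm_le_norm_smul_add_orthogonal (u : E) (t : ℝ) (s : (ℝ ∙ u)ᗮ) :
    ‖(s : E)‖ ≤ ‖t • u + s‖ := by
  have hperp : ⟪t • u, (s : E)⟫ = 0 := Submodule.inner_right_of_mem_orthogonal
    (Submodule.smul_mem _ t (Submodule.mem_span_singleton_self u)) s.2
  rw [mul_self_le_mul_self_iff (norm_nonneg _) (norm_nonneg _),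
    norm_add_sq_eq_norm_sq_add_norm_sq_real hperp]
  exact le_add_of_nonneg_left (mul_self_nonneg _)

theorem inner_smul_add_orthogonal_smul (u : E) (hu : ‖u‖ = 1) (t k : ℝ) (s : (ℝ ∙ u)ᗮ) :
    ⟪t • u + s, k • u⟫ = t * k := by
  have hsu : ⟪(s : E), u⟫ = 0 :=
    Submodule.inner_left_of_mem_orthogonal (Submodule.mem_span_singleton_self u) s.2
  rw [inner_add_left, real_inner_smul_left, real_inner_smul_right, real_inner_smul_right,
    real_inner_self_eq_norm_sq, hu, hsu]
  ring

variable [FiniteDimensional ℝ E] [MeasurableSpace E] [BorelSpace E]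

theorem measurePreserving_smul_add_orthogonal (u : E) (hu : ‖u‖ = 1) :
    MeasurePreserving (fun p : ℝ × (ℝ ∙ u)ᗮ ↦ p.1 • u + (p.2 : E)) :=
  (orthogonalSliceEquiv u hu).measurePreserving.comp (WithLp.volume_preserving_toLp ℝ _)

theorem measurableEmbedding_smul_add_orthogonal (u : E) (hu : ‖u‖ = 1) :
    MeasurableEmbedding (fun p : ℝ × (ℝ ∙ u)ᗮ ↦ p.1 • u + (p.2 : E)) :=
  ((MeasurableEquiv.toLp 2 _).trans
    (orthogonalSliceEquiv u hu).toMeasurableEquiv).measurableEmbedding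

variable {F : Type*} [NormedAddCommGroup F]

theorem MeasureTheory.Integrable.comp_smul_add_orthogonal {f : E → F} (hf : Integrable f)
    (u : E) (hu : ‖u‖ = 1) :
    Integrable (fun p : ℝ × (ℝ ∙ u)ᗮ ↦ f (p.1 • u + p.2)) :=
  ((measurePreserving_smul_add_orthogonal u hu).integrable_comp_emb
    (measurableEmbedding_smul_add_orthogonal u hu)).2 hf

variable [NormedSpace ℝ F]

theorem MeasureTheory.Integrable.integral_smul_add_orthogonal {f : E → F} (hf : Integrable f)
    (u : E) (hu : ‖u‖ = 1) :
    Integrable (fun t : ℝ ↦ ∫ s : (ℝ ∙ u)ᗮ, f (t • u + s)) :=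
  (hf.comp_smul_add_orthogonal u hu).integral_prod_left

theorem integral_integral_smul_add_orthogonal {f : E → F} (hf : Integrable f)
    (u : E) (hu : ‖u‖ = 1) :
    ∫ t : ℝ, ∫ s : (ℝ ∙ u)ᗮ, f (t • u + s) = ∫ x, f x := by
  rw [integral_integral (hf.comp_smul_add_orthogonal u hu)]
  exact (measurePreserving_smul_add_orthogonal u hu).integral_comp
    (measurableEmbedding_smul_add_orthogonal u hu) f

end OrthogonalSlice

theorem fourier_integral_smul_add_orthogonal {E F : Type*}
    [NormedAddCommGroup E] [InnerProductSpace ℝ E] [FiniteDimensional ℝ E]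
    [MeasurableSpace E] [BorelSpace E] [NormedAddCommGroup F] [NormedSpace ℂ F]
    {f : E → F} (hf : Integrable f) (u : E) (hu : ‖u‖ = 1) (k : ℝ) :
    𝓕 (fun t : ℝ ↦ ∫ s : (ℝ ∙ u)ᗮ, f (t • u + s)) k = 𝓕 f (k • u) := by
  rw [Real.fourier_eq, Real.fourier_eq]
  calc ∫ t : ℝ, 𝐞 (-⟪t, k⟫) • ∫ s : (ℝ ∙ u)ᗮ, f (t • u + s)
      = ∫ t : ℝ, ∫ s : (ℝ ∙ u)ᗮ, 𝐞 (-⟪t • u + s, k • u⟫) • f (t • u + s) := by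
        congr with t
        simp only [inner_smul_add_orthogonal_smul u hu, Real.inner_apply]
        exact (integral_smul _ _).symm
    _ = ∫ x, 𝐞 (-⟪x, k • u⟫) • f x :=
        integral_integral_smul_add_orthogonal
          ((Real.fourierIntegral_convergent_iff (k • u)).2 hf) u hu

theorem integral_norm_sq_eq_of_fourier_eq_schwartzMap {V H : Type*}
    [NormedAddCommGroup V] [InnerProductSpace ℝ V] [FiniteDimensional ℝ V]
    [MeasurableSpace V] [BorelSpace V]
    [NormedAddCommGroup H] [InnerProductSpace ℂ H] [CompleteSpace H]
    {g : V → H} (hg : Continuous g) (hg_int : Integrable g) (φ : 𝓢(V, H)) (hφ : 𝓕 g = φ) :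
    ∫ ξ, ‖φ ξ‖ ^ 2 = ∫ x, ‖g x‖ ^ 2 := by
  have hg_eq : g = 𝓕⁻ (φ : V → H) := by
    rw [← hφ, hg.fourierInv_fourier_eq hg_int (hφ ▸ φ.integrable)]
  have := SchwartzMap.integral_norm_sq_fourier (𝓕⁻ φ)
  rwa [FourierTransform.fourier_fourierInv_eq, SchwartzMap.fourierInv_coe, ← hg_eq] at this

namespace SchwartzMap

section

variable {E F : Type*} [NormedAddCommGroup E] [NormedSpace ℝ E]
  [NormedAddCommGroup F] [NormedSpace ℝ F]

noncomputable def compToSpanSingleton (φ : 𝓢(E, F)) {u : E} (hu : u ≠ 0) : 𝓢(ℝ, F) :=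
  compCLMOfAntilipschitz ℝ (ContinuousLinearMap.toSpanSingleton ℝ u).hasTemperateGrowth
    ((ContinuousLinearMap.toSpanSingleton ℝ u).antilipschitz_of_bound (K := ‖u‖₊⁻¹)
      fun k ↦ by simp [norm_smul, norm_ne_zero_iff.2 hu, mul_comm |k|]) φ

@[simp]
theorem compToSpanSingleton_apply (φ : 𝓢(E, F)) {u : E} (hu : u ≠ 0) (k : ℝ) :
    φ.compToSpanSingleton hu k = φ (k • u) := rfl

theorem exists_norm_le_mul_one_add_norm_rpow_neg (f : 𝓢(E, F)) (k : ℕ) :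
    ∃ C, 0 ≤ C ∧ ∀ x, ‖f x‖ ≤ C * (1 + ‖x‖) ^ (-(k : ℝ)) := by
  refine ⟨2 ^ k * (Finset.Iic (k, 0)).sup (fun m ↦ SchwartzMap.seminorm ℝ m.1 m.2) f,
    by positivity, fun x ↦ ?_⟩
  rw [Real.rpow_neg (by positivity), ← div_eq_mul_inv, le_div_iff₀ (by positivity),
    Real.rpow_natCast, mul_comm]
  simpa using one_add_le_sup_seminorm_apply (𝕜 := ℝ) (m := (k, 0)) le_rfl le_rfl f x

end

theorem continuous_integral_smul_add_orthogonal {E F : Type*}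
    [NormedAddCommGroup E] [InnerProductSpace ℝ E] [FiniteDimensional ℝ E]
    [MeasurableSpace E] [BorelSpace E] [NormedAddCommGroup F] [NormedSpace ℝ F]
    (f : 𝓢(E, F)) (u : E) :
    Continuous fun t : ℝ ↦ ∫ s : (ℝ ∙ u)ᗮ, f (t • u + s) := by
  obtain ⟨C, hC0, hC⟩ := f.exists_norm_le_mul_one_add_norm_rpow_neg (Module.finrank ℝ E + 1)
  have hdim : (Module.finrank ℝ (ℝ ∙ u)ᗮ : ℝ) < (Module.finrank ℝ E + 1 : ℕ) := by
    exact_mod_cast Nat.lt_succ_of_le (Submodule.finrank_le (ℝ ∙ u)ᗮ)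
  -- `‖s‖ ≤ ‖t • u + s‖` makes the decay of `f` along `(ℝ ∙ u)ᗮ` uniform in `t`
  refine continuous_of_dominated
    (bound := fun s ↦ C * (1 + ‖s‖) ^ (-((Module.finrank ℝ E + 1 : ℕ) : ℝ)))
    (fun t ↦ (f.continuous.comp (by fun_prop)).aestronglyMeasurable)
    (fun t ↦ .of_forall fun s ↦ (hC _).trans ?_)
    ((integrable_one_add_norm hdim).const_mul C)
    (.of_forall fun s ↦ f.continuous.comp (by fun_prop))
  gcongr C * ?_
  exact Real.rpow_le_rpow_of_nonpos (by positivity)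
    (add_le_add_right (norm_le_norm_smul_add_orthogonal u t s) 1) (neg_nonpos.2 (by positivity))

end SchwartzMap

/-- spoke energy equals projection energy: for a Schwartz function
`f` on ℝ³ and a unit vector `u`, the energy of the k-space radial spoke in
direction `u` equals the energy of the corresponding image-space projection:
`∫ℝ ‖𝓕₃ f (k • u)‖² dk = ∫ℝ ‖p_{f,u}(t)‖² dt`. -/
theorem spoke_energy_eq_projection_energy
    (f : SchwartzMap (EuclideanSpace ℝ (Fin 3)) ℂ)
    (u : EuclideanSpace ℝ (Fin 3)) (hu : ‖u‖ = 1) :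
    ∫ k : ℝ, ‖𝓕 (⇑f) (k • u)‖ ^ 2 = ∫ t : ℝ, ‖proj (⇑f) u t‖ ^ 2 := by
  have hu0 : u ≠ 0 := norm_ne_zero_iff.1 (by simp [hu])
  have hslice : 𝓕 (proj f u) = (𝓕 f).compToSpanSingleton hu0 := by
    ext k
    rw [SchwartzMap.compToSpanSingleton_apply, SchwartzMap.fourier_coe]
    exact fourier_integral_smul_add_orthogonal f.integrable u hu k
  exact integral_norm_sq_eq_of_fourier_eq_schwartzMap (g := proj f u)
    (f.continuous_integral_smul_add_orthogonal u) (f.integrable.integral_smul_add_orthogonal u hu)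
    _ hslice
end
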